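/- There exists a nonzero polynomial g in 6 real variables such that for every b = (b11,b12,b13,b22,b23,b33) ∈ ℝ⁶ with g(b) ≠ 0, the homogenized slowness polynomial P̃_b = det(Γ_b − p₀²·I₂), viewed as an element of ℂ[p₀,p₁,p₂], is irreducible. -/

import Mathlib

open MvPolynomial Matrix

/-- The Christoffel matrix of a two-dimensional stiffness tensor with Voigt parameters
`b = (b11,b12,b13,b22,b23,b33)` (indexed `0,…,5`), with polynomial entries in `ℂ[p₀,p₁,p₂]`
(where `p₁ = X 1`, `p₂ = X 2`). -/
noncomputable def christoffel2 (b : Fin 6 → ℝ) :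
    Matrix (Fin 2) (Fin 2) (MvPolynomial (Fin 3) ℂ) :=
  !![C (b 0 : ℂ) * X 1 ^ 2 + C (2 * b 2 : ℂ) * X 1 * X 2 + C (b 5 : ℂ) * X 2 ^ 2,
     C (b 2 : ℂ) * X 1 ^ 2 + C (b 5 + b 1 : ℂ) * X 1 * X 2 + C (b 4 : ℂ) * X 2 ^ 2;
     C (b 2 : ℂ) * X 1 ^ 2 + C (b 5 + b 1 : ℂ) * X 1 * X 2 + C (b 4 : ℂ) * X 2 ^ 2,
     C (b 5 : ℂ) * X 1 ^ 2 + C (2 * b 4 : ℂ) * X 1 * X 2 + C (b 3 : ℂ) * X 2 ^ 2]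

/-- The homogenized slowness polynomial `det(Γ_b − p₀²·I₂) ∈ ℂ[p₀,p₁,p₂]`. -/
noncomputable def slownessHom2 (b : Fin 6 → ℝ) : MvPolynomial (Fin 3) ℂ :=
  (christoffel2 b - (X 0 ^ 2 : MvPolynomial (Fin 3) ℂ) • 1).det

/-!
Over `A = ℂ[p₁, p₂]` the slowness polynomial is the biquadratic `p₀⁴ - T p₀² + D` in `p₀`, with
`T = tr Γ_b` and `D = det Γ_b`. Being monic, it is irreducible once it is irreducible over
`Frac A`, which holds when neither `T² - 4D` nor `D` is a square in `Frac A`, or equivalently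
(`A` being integrally closed) in `A`. A square form stays a square after dehomogenizing, and a
square quartic `∑ cᵢ Xⁱ` satisfies `8c₄²c₁ - 4c₄c₃c₂ + c₃³ = 0`. The product of these two
expressions for `D` and `T² - 4D`, as polynomials in `b`, is the required `g`; it is nonzero since
it does not vanish at `b = (1, -1, 1, 0, -1, 2)`.
-/

theorem IsSquare.of_algebraMap {A K : Type*} [CommRing A] [IsDomain A] [IsIntegrallyClosed A]
    [CommRing K] [Algebra A K] [IsFractionRing A K] {u : A} (h : IsSquare (algebraMap A K u)) :
    IsSquare u := by
  obtain ⟨z, hz⟩ := h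
  obtain ⟨w, rfl⟩ := IsIntegrallyClosed.exists_algebraMap_eq_of_isIntegral_pow (R := A) (x := z)
    two_pos (by rw [pow_two, ← hz]; exact isIntegral_algebraMap)
  exact ⟨w, IsFractionRing.injective A K (by rw [hz, map_mul])⟩

namespace Polynomial

section CommRing

variable {R : Type*} [CommRing R]

theorem Monic.eq_X_sq_add_C_mul_X_add_C {p : R[X]} (hm : p.Monic) (h : p.natDegree = 2) :
    p = X ^ 2 + C (p.coeff 1) * X + C (p.coeff 0) := by
  have hp := eq_quadratic_of_degree_le_two (natDegree_le_iff_degree_le.mp h.le)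
  rwa [← h, hm.coeff_natDegree, C_1, one_mul, h] at hp

theorem monic_X_pow_four_sub_C_mul_X_sq_add_C (t d : R) :
    (X ^ 4 - C t * X ^ 2 + C d : R[X]).Monic := by
  monicity!

theorem natDegree_X_pow_four_sub_C_mul_X_sq_add_C [Nontrivial R] (t d : R) :
    (X ^ 4 - C t * X ^ 2 + C d : R[X]).natDegree = 4 := by
  compute_degree!

/-- Obtained by eliminating `e₀, e₁, e₂` from `c₄ = e₂²`, `c₃ = 2e₂e₁`, `c₂ = e₁² + 2e₂e₀`,
`c₁ = 2e₁e₀`, the coefficients of `(e₂X² + e₁X + e₀)²`. -/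
def quarticSquareObstruction (u : R[X]) : R :=
  8 * u.coeff 4 ^ 2 * u.coeff 1 - 4 * u.coeff 4 * u.coeff 3 * u.coeff 2 + u.coeff 3 ^ 3

theorem quarticSquareObstruction_map {S : Type*} [CommRing S] (f : R →+* S) (u : R[X]) :
    (u.map f).quarticSquareObstruction = f u.quarticSquareObstruction := by
  simp [quarticSquareObstruction, map_ofNat]

theorem quarticSquareObstruction_mul_self {v : R[X]} (hv : v.natDegree ≤ 2) :
    (v * v).quarticSquareObstruction = 0 := by
  rw [eq_quadratic_of_degree_le_two (natDegree_le_iff_degree_le.mp hv)]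
  simp [quarticSquareObstruction, add_mul, mul_add, mul_assoc, coeff_X_pow_mul', coeff_mul_X_pow',
    coeff_C_mul, coeff_mul_C, coeff_X_mul, coeff_mul_X, coeff_X]
  ring

theorem _root_.IsSquare.quarticSquareObstruction_eq_zero [IsDomain R] {u : R[X]}
    (hu : IsSquare u) (hdeg : u.natDegree ≤ 4) : u.quarticSquareObstruction = 0 := by
  obtain ⟨v, rfl⟩ := hu
  rw [← sq, natDegree_pow] at hdeg
  exact quarticSquareObstruction_mul_self (by omega)

end CommRing

/-- A biquadratic `X⁴ - tX² + d` can only split off a linear factor `X - z` with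
`(2z² - t)² = t² - 4d`, or two monic quadratics `X² + aX + b`, `X² - aX + b'` with either
`a = 0`, so that `t² - 4d = (b - b')²`, or `b = b'`, so that `d = b²`. -/
theorem irreducible_X_pow_four_sub_C_mul_X_sq_add_C {F : Type*} [Field F] {t d : F}
    (ht : ¬IsSquare (t ^ 2 - 4 * d)) (hd : ¬IsSquare d) :
    Irreducible (X ^ 4 - C t * X ^ 2 + C d : F[X]) := by
  have hm := monic_X_pow_four_sub_C_mul_X_sq_add_C t d
  have hdeg4 := natDegree_X_pow_four_sub_C_mul_X_sq_add_C t d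
  refine hm.irreducible_iff_natDegree'.mpr ⟨fun h => by simp [h] at hdeg4, ?_⟩
  rintro f g hf hg hfg hdeg
  rw [hdeg4, Finset.mem_Ioc] at hdeg
  obtain hg1 | hg2 : g.natDegree = 1 ∨ g.natDegree = 2 := by omega
  · have hroot : (X ^ 4 - C t * X ^ 2 + C d : F[X]).IsRoot (-g.coeff 0) := by
      rw [← hfg, hg.eq_X_add_C hg1]
      simp
    simp only [IsRoot, eval_add, eval_sub, eval_mul, eval_pow, eval_C, eval_X] at hroot
    exact ht ⟨2 * g.coeff 0 ^ 2 - t, by linear_combination (-4 : F) * hroot⟩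
  · have hf2 : f.natDegree = 2 := by
      have := congrArg natDegree hfg
      rw [hf.natDegree_mul hg, hdeg4] at this
      omega
    rw [hf.eq_X_sq_add_C_mul_X_add_C hf2, hg.eq_X_sq_add_C_mul_X_add_C hg2] at hfg
    set a := f.coeff 1
    set b := f.coeff 0
    set a' := g.coeff 1
    set b' := g.coeff 0
    have hc (n : ℕ) := congrArg (coeff · n) hfg
    have h3 : a + a' = 0 := by
      simpa [add_mul, mul_add, mul_assoc, coeff_C_mul, coeff_X_pow_mul', coeff_X_mul] using hc 3
    have h2 : b + a * a' + b' = -t := by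
      simpa [add_mul, mul_add, mul_assoc, coeff_C_mul, coeff_X_pow_mul', coeff_X_mul] using hc 2
    have h1 : b * a' + a * b' = 0 := by
      simpa [add_mul, mul_add, mul_assoc, coeff_C_mul, coeff_X_pow_mul', coeff_X_mul] using hc 1
    have h0 : b * b' = d := by simpa using hc 0
    have : a * (b' - b) = 0 := by linear_combination h1 - b * h3
    rcases mul_eq_zero.mp this with ha | hb
    · exact ht ⟨b - b', by linear_combination (t - b - b') * h2 - a' * (t - b - b') * ha + 4 * h0⟩
    · exact hd ⟨b, by linear_combination -h0 + b * hb⟩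

theorem irreducible_X_pow_four_sub_C_mul_X_sq_add_C_of_isIntegrallyClosed {A : Type*}
    [CommRing A] [IsDomain A] [IsIntegrallyClosed A] {t d : A}
    (ht : ¬IsSquare (t ^ 2 - 4 * d)) (hd : ¬IsSquare d) :
    Irreducible (X ^ 4 - C t * X ^ 2 + C d : A[X]) := by
  rw [(monic_X_pow_four_sub_C_mul_X_sq_add_C t d).irreducible_iff_irreducible_map_fraction_map
    (K := FractionRing A)]
  simp only [Polynomial.map_add, Polynomial.map_sub, Polynomial.map_pow, Polynomial.map_mul,
    map_X, map_C]
  refine irreducible_X_pow_four_sub_C_mul_X_sq_add_C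
    (fun h => ht (.of_algebraMap (K := FractionRing A) ?_)) (fun h => hd (.of_algebraMap h))
  simpa [map_ofNat] using h

end Polynomial

open scoped Polynomial

noncomputable section

/-- `tr Γ_b` as a form in `ℂ[p₁, p₂]`, where now `p₁ = X 0` and `p₂ = X 1`. -/
def christoffelTrace (b : Fin 6 → ℝ) : MvPolynomial (Fin 2) ℂ :=
  C ((b 0 + b 5 : ℝ) : ℂ) * X 0 ^ 2 + C ((2 * (b 2 + b 4) : ℝ) : ℂ) * X 0 * X 1
    + C ((b 3 + b 5 : ℝ) : ℂ) * X 1 ^ 2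

/-- `det Γ_b` as a form in `ℂ[p₁, p₂]`, where now `p₁ = X 0` and `p₂ = X 1`. -/
def christoffelDet (b : Fin 6 → ℝ) : MvPolynomial (Fin 2) ℂ :=
  C ((b 0 * b 5 - b 2 ^ 2 : ℝ) : ℂ) * X 0 ^ 4
    + C ((2 * (b 0 * b 4 - b 1 * b 2) : ℝ) : ℂ) * X 0 ^ 3 * X 1
    + C ((b 0 * b 3 + 2 * b 2 * b 4 - b 1 * (b 1 + 2 * b 5) : ℝ) : ℂ) * X 0 ^ 2 * X 1 ^ 2
    + C ((2 * (b 2 * b 3 - b 1 * b 4) : ℝ) : ℂ) * X 0 * X 1 ^ 3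
    + C ((b 3 * b 5 - b 4 ^ 2 : ℝ) : ℂ) * X 1 ^ 4

theorem finSuccEquiv_slownessHom2 (b : Fin 6 → ℝ) :
    finSuccEquiv ℂ 2 (slownessHom2 b) = Polynomial.X ^ 4
      - Polynomial.C (christoffelTrace b) * Polynomial.X ^ 2 + Polynomial.C (christoffelDet b) := by
  have hX1 : finSuccEquiv ℂ 2 (X 1) = Polynomial.C (X 0) := finSuccEquiv_X_succ (j := 0)
  have hX2 : finSuccEquiv ℂ 2 (X 2) = Polynomial.C (X 1) := finSuccEquiv_X_succ (j := 1)
  have hC (c : ℂ) : finSuccEquiv ℂ 2 (C c) = Polynomial.C (C c) := (finSuccEquiv ℂ 2).commutes c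
  rw [slownessHom2, christoffel2, det_fin_two]
  simp [christoffelTrace, christoffelDet, hC, hX1, hX2, finSuccEquiv_X_zero, map_ofNat]
  ring

def dehomogenize : MvPolynomial (Fin 2) ℂ →ₐ[ℂ] ℂ[X] :=
  aeval ![Polynomial.X, 1]

/-- `tr Γ_b` at `(p₁, p₂) = (X, 1)`, with the Voigt parameters `b` as variables. -/
def genericTrace : (MvPolynomial (Fin 6) ℝ)[X] :=
  Polynomial.C (X 0 + X 5) * Polynomial.X ^ 2 + Polynomial.C (2 * (X 2 + X 4)) * Polynomial.X
    + Polynomial.C (X 3 + X 5)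

/-- `det Γ_b` at `(p₁, p₂) = (X, 1)`, with the Voigt parameters `b` as variables. -/
def genericDet : (MvPolynomial (Fin 6) ℝ)[X] :=
  Polynomial.C (X 0 * X 5 - X 2 ^ 2) * Polynomial.X ^ 4
    + Polynomial.C (2 * (X 0 * X 4 - X 1 * X 2)) * Polynomial.X ^ 3
    + Polynomial.C (X 0 * X 3 + 2 * X 2 * X 4 - X 1 * (X 1 + 2 * X 5)) * Polynomial.X ^ 2
    + Polynomial.C (2 * (X 2 * X 3 - X 1 * X 4)) * Polynomial.X + Polynomial.C (X 3 * X 5 - X 4 ^ 2)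

def genericDisc : (MvPolynomial (Fin 6) ℝ)[X] :=
  genericTrace ^ 2 - 4 * genericDet

def genericityCondition : MvPolynomial (Fin 6) ℝ :=
  genericDet.quarticSquareObstruction * genericDisc.quarticSquareObstruction

theorem natDegree_genericDet_le : genericDet.natDegree ≤ 4 := by
  unfold genericDet
  compute_degree

theorem natDegree_genericDisc_le : genericDisc.natDegree ≤ 4 := by
  unfold genericDisc genericTrace genericDet
  compute_degree

theorem dehomogenize_christoffelTrace (b : Fin 6 → ℝ) :
    dehomogenize (christoffelTrace b) = genericTrace.map (Complex.ofRealHom.comp (eval b)) := by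
  simp [dehomogenize, christoffelTrace, genericTrace, map_ofNat]

theorem dehomogenize_christoffelDet (b : Fin 6 → ℝ) :
    dehomogenize (christoffelDet b) = genericDet.map (Complex.ofRealHom.comp (eval b)) := by
  simp [dehomogenize, christoffelDet, genericDet, map_ofNat]

theorem dehomogenize_christoffelDisc (b : Fin 6 → ℝ) :
    dehomogenize (christoffelTrace b ^ 2 - 4 * christoffelDet b)
      = genericDisc.map (Complex.ofRealHom.comp (eval b)) := by
  simp [genericDisc, dehomogenize_christoffelTrace, dehomogenize_christoffelDet, map_ofNat]

theorem genericityCondition_ne_zero : genericityCondition ≠ 0 := by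
  set p : Fin 6 → ℝ := ![1, -1, 1, 0, -1, 2]
  have hT : genericTrace.map (eval p) = 3 * Polynomial.X ^ 2 + 2 := by
    simp [genericTrace, p, map_ofNat]
    norm_num
  have hD : genericDet.map (eval p)
      = Polynomial.X ^ 4 + Polynomial.X ^ 2 - 2 * Polynomial.X - 1 := by
    simp [genericDet, p, map_ofNat]
    norm_num
    ring
  have hE : genericDisc.map (eval p)
      = 5 * Polynomial.X ^ 4 + 8 * Polynomial.X ^ 2 + 8 * Polynomial.X + 8 := by
    rw [genericDisc, Polynomial.map_sub, Polynomial.map_pow, Polynomial.map_mul, hT, hD,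
      Polynomial.map_ofNat]
    ring
  intro h
  have h0 := congrArg (eval p) h
  rw [genericityCondition, map_mul, ← Polynomial.quarticSquareObstruction_map,
    ← Polynomial.quarticSquareObstruction_map, hD, hE, map_zero] at h0
  simp [Polynomial.quarticSquareObstruction, Polynomial.coeff_X, Polynomial.coeff_X_pow,
    Polynomial.coeff_one] at h0

theorem not_isSquare_of_dehomogenize_eq_map {u : MvPolynomial (Fin 2) ℂ}
    {q : (MvPolynomial (Fin 6) ℝ)[X]} (b : Fin 6 → ℝ)
    (hu : dehomogenize u = q.map (Complex.ofRealHom.comp (eval b))) (hq : q.natDegree ≤ 4)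
    (hobs : eval b q.quarticSquareObstruction ≠ 0) : ¬IsSquare u := by
  intro hsq
  have := (hsq.map dehomogenize).quarticSquareObstruction_eq_zero
    (hu ▸ (Polynomial.natDegree_map_le).trans hq)
  rw [hu, Polynomial.quarticSquareObstruction_map] at this
  exact hobs (by simpa using this)

end

/-- For generic `b ∈ ℝ⁶`, the homogenized two-dimensional slowness polynomial
is irreducible over `ℂ`. -/
theorem generic_irreducibility_2D :
    ∃ g : MvPolynomial (Fin 6) ℝ, g ≠ 0 ∧
      ∀ b : Fin 6 → ℝ, eval b g ≠ 0 → Irreducible (slownessHom2 b) := by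
  refine ⟨genericityCondition, genericityCondition_ne_zero, fun b hb => ?_⟩
  rw [genericityCondition, map_mul] at hb
  rw [← MulEquiv.irreducible_iff (finSuccEquiv ℂ 2), finSuccEquiv_slownessHom2]
  exact Polynomial.irreducible_X_pow_four_sub_C_mul_X_sq_add_C_of_isIntegrallyClosed
    (not_isSquare_of_dehomogenize_eq_map b (dehomogenize_christoffelDisc b)
      natDegree_genericDisc_le (right_ne_zero_of_mul hb))
    (not_isSquare_of_dehomogenize_eq_map b (dehomogenize_christoffelDet b)
      natDegree_genericDet_le (left_ne_zero_of_mul hb))
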